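/- arXiv:2010.02699 — 3 statements merged into one kernel-verified Lean document; each statement's English description precedes it below -/
import Mathlib

section
/- Let N ≥ 1, let τ and τ' be permutations of {1,…,N}, and let Γ, g be N×N complex matrices with det g ≠ 0. Suppose that in ℂ[X_1,…,X_N,Y_1,…,Y_N], for every l = 1,…,N, the identity Σ_{k=1}^N g_{l,k}·X_k·Y_{τ(k)} = (Σ_{i=1}^N Γ_{l,i}·X_i)·(Σ_{j=1}^N conj(Γ_{τ'(l),j})·Y_j) holds. Then det Γ ≠ 0, and there exists a permutation π of {1,…,N} such that for every l: Γ_{l,k} ≠ 0 exactly when k = π(l); τ(π(l)) = π(τ'(l)); g_{l,k} = 0 for every k ≠ π(l); and g_{l,π(l)} = Γ_{l,π(l)}·conj(Γ_{τ'(l),τ(π(l))}) ≠ 0. -/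
/-!
Comparing the coefficients of `X_i Y_j` on both sides shows that, for each `l`, the rank-one
matrix `(Γ_{l,i} conj Γ_{τ'(l),j})_{i,j}` is supported on the graph of `τ`, with entries
`g_{l,i}` there. Since `g_l ≠ 0`, the row `Γ_l` then has a single nonzero entry, at a position `π(l)`, and
`g` is supported on the graph of `π`; as `det g ≠ 0`, `π` is a permutation, and `Γ`, being a
diagonal matrix times a permutation matrix, is invertible.
-/

open MvPolynomial

theorem MvPolynomial.mul_eq_ite_of_sum_X_mul_X_eq_mul
    {R ι κ : Type*} [CommSemiring R] [Fintype ι] [Fintype κ] [DecidableEq ι] [DecidableEq κ]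
    (f : ι → κ) (c a : ι → R) (b : κ → R)
    (h : (∑ k, C (c k) * X (Sum.inl k) * X (Sum.inr (f k)) : MvPolynomial (ι ⊕ κ) R) =
      (∑ i, C (a i) * X (Sum.inl i)) * (∑ j, C (b j) * X (Sum.inr j)))
    (i : ι) (j : κ) :
    a i * b j = if j = f i then c i else 0 := by
  have := congrArg (eval (Sum.elim (Pi.single i 1) (Pi.single j 1))) h
  simp only [map_sum, map_mul, eval_C, eval_X, Sum.elim_inl, Sum.elim_inr, Pi.single_apply,
    mul_ite, mul_one, mul_zero, Finset.sum_ite_eq', Finset.mem_univ, if_true] at this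
  rw [← this, Finset.sum_eq_single i (fun k _ hk => by simp [hk]) (by simp)]
  simp [eq_comm]

theorem support_eq_singleton_of_mul_eq_ite {R ι κ : Type*} [MulZeroClass R] [NoZeroDivisors R]
    [DecidableEq κ] {f : ι → κ} (hf : Function.Injective f) {c a : ι → R} {b : κ → R}
    (hab : ∀ i j, a i * b j = if j = f i then c i else 0) {p : ι} (hp : c p ≠ 0) :
    (∀ i, a i ≠ 0 ↔ i = p) ∧ (∀ j, b j ≠ 0 ↔ j = f p) ∧
      (∀ i, i ≠ p → c i = 0) ∧ c p = a p * b (f p) := by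
  have hcp : c p = a p * b (f p) := by simp [hab]
  have hap : a p ≠ 0 := fun h0 => hp (by simp [hcp, h0])
  have hbp : b (f p) ≠ 0 := fun h0 => hp (by simp [hcp, h0])
  have ha : ∀ i, a i ≠ 0 → i = p := fun i hi => by
    by_contra hne
    have := hab i (f p)
    rw [if_neg (fun h => hne (hf h).symm)] at this
    exact (mul_ne_zero hi hbp) this
  have hb : ∀ j, b j ≠ 0 → j = f p := fun j hj => by
    by_contra hne
    have := hab p j
    rw [if_neg hne] at this
    exact (mul_ne_zero hap hj) this
  refine ⟨fun i => ⟨ha i, fun hi => hi ▸ hap⟩, fun j => ⟨hb j, fun hj => hj ▸ hbp⟩,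
    fun i hi => ?_, hcp⟩
  have := hab i (f i)
  rw [if_pos rfl] at this
  rw [← this, not_ne_iff.mp (mt (ha i) hi), zero_mul]

namespace Matrix

variable {n R : Type*} [Fintype n] [DecidableEq n]

theorem surjective_of_det_ne_zero_of_apply_eq_zero [CommRing R] {M : Matrix n n R}
    (hM : M.det ≠ 0) {p : n → n} (hp : ∀ l k, k ≠ p l → M l k = 0) :
    Function.Surjective p := by
  by_contra hsurj
  obtain ⟨k, hk⟩ := not_forall.mp hsurj
  exact hM (det_eq_zero_of_column_eq_zero k fun l => hp l k fun h => hk ⟨l, h.symm⟩)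

theorem det_ne_zero_of_ne_zero_iff_eq_perm [CommRing R] [IsDomain R] {M : Matrix n n R}
    (π : Equiv.Perm n) (hM : ∀ l k, M l k ≠ 0 ↔ k = π l) : M.det ≠ 0 := by
  have hdiag : M.submatrix id π = diagonal fun l => M l (π l) := by
    ext l k
    by_cases hlk : l = k
    · simp [hlk]
    · rw [submatrix_apply, id, diagonal_apply_ne _ hlk]
      by_contra hne
      exact hlk (π.injective ((hM l (π k)).mp hne)).symm
  have hprod : (M.submatrix id π).det ≠ 0 := by
    rw [hdiag, det_diagonal]
    exact Finset.prod_ne_zero_iff.mpr fun l _ => (hM l (π l)).mpr rfl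
  rw [det_permute'] at hprod
  exact right_ne_zero_of_mul hprod

end Matrix

theorem linear_part_permutation_structure_general (N : ℕ)
    (τ τ' : Equiv.Perm (Fin N)) (Γ g : Matrix (Fin N) (Fin N) ℂ) (hg : g.det ≠ 0)
    (h : ∀ l : Fin N,
        (∑ k : Fin N, C (g l k) * X (Sum.inl k) * X (Sum.inr (τ k))
            : MvPolynomial (Fin N ⊕ Fin N) ℂ) =
          (∑ i : Fin N, C (Γ l i) * X (Sum.inl i)) *
            (∑ j : Fin N, C ((starRingEnd ℂ) (Γ (τ' l) j)) * X (Sum.inr j))) :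
    Γ.det ≠ 0 ∧ ∃ π : Equiv.Perm (Fin N), ∀ l : Fin N,
      (∀ k : Fin N, Γ l k ≠ 0 ↔ k = π l) ∧
      τ (π l) = π (τ' l) ∧
      (∀ k : Fin N, k ≠ π l → g l k = 0) ∧
      g l (π l) = Γ l (π l) * (starRingEnd ℂ) (Γ (τ' l) (τ (π l))) ∧
      g l (π l) ≠ 0 := by
  have hrow : ∀ l, ∃ k, g l k ≠ 0 := fun l => by
    by_contra! h0
    exact hg (Matrix.det_eq_zero_of_row_eq_zero l h0)
  choose p hp using hrow
  have hsupp := fun l => support_eq_singleton_of_mul_eq_ite τ.injective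
    (MvPolynomial.mul_eq_ite_of_sum_X_mul_X_eq_mul _ _ _ _ (h l)) (hp l)
  have hsurj := Matrix.surjective_of_det_ne_zero_of_apply_eq_zero hg fun l => (hsupp l).2.2.1
  let π := Equiv.ofBijective p ⟨Finite.injective_iff_surjective.mpr hsurj, hsurj⟩
  have hΓ : ∀ l k, Γ l k ≠ 0 ↔ k = π l := fun l => (hsupp l).1
  refine ⟨Matrix.det_ne_zero_of_ne_zero_iff_eq_perm π hΓ, π,
    fun l => ⟨hΓ l, ?_, (hsupp l).2.2.1, (hsupp l).2.2.2, hp l⟩⟩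
  -- row `τ' l` of `Γ` has its only nonzero entry both at `τ (π l)` and at `π (τ' l)`
  have hconj : (starRingEnd ℂ) (Γ (τ' l) (π (τ' l))) ≠ 0 :=
    (map_ne_zero _).mpr ((hΓ (τ' l) _).mpr rfl)
  exact ((hsupp l).2.1 _ |>.mp hconj).symm

/-- Let `τ, τ'` be permutations of `{1,…,N}` and `Γ, g` be `N×N` complex
matrices with `det g ≠ 0`. If in `ℂ[X_1,…,X_N,Y_1,…,Y_N]` (here `X_k = X (Sum.inl k)`,
`Y_j = X (Sum.inr j)`) we have, for every `l`,
`Σ_k g_{l,k}·X_k·Y_{τ(k)} = (Σ_i Γ_{l,i}·X_i)·(Σ_j conj(Γ_{τ'(l),j})·Y_j)`,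
then `det Γ ≠ 0` and there is a permutation `π` such that for every `l`:
`Γ_{l,k} ≠ 0` exactly when `k = π(l)`; `τ(π(l)) = π(τ'(l))`; `g_{l,k} = 0` for `k ≠ π(l)`;
and `g_{l,π(l)} = Γ_{l,π(l)}·conj(Γ_{τ'(l),τ(π(l))}) ≠ 0`. -/
theorem linear_part_permutation_structure (N : ℕ) (hN : 1 ≤ N)
    (τ τ' : Equiv.Perm (Fin N)) (Γ g : Matrix (Fin N) (Fin N) ℂ) (hg : g.det ≠ 0)
    (h : ∀ l : Fin N,
        (∑ k : Fin N, C (g l k) * X (Sum.inl k) * X (Sum.inr (τ k))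
            : MvPolynomial (Fin N ⊕ Fin N) ℂ) =
          (∑ i : Fin N, C (Γ l i) * X (Sum.inl i)) *
            (∑ j : Fin N, C ((starRingEnd ℂ) (Γ (τ' l) j)) * X (Sum.inr j))) :
    Γ.det ≠ 0 ∧ ∃ π : Equiv.Perm (Fin N), ∀ l : Fin N,
      (∀ k : Fin N, Γ l k ≠ 0 ↔ k = π l) ∧
      τ (π l) = π (τ' l) ∧
      (∀ k : Fin N, k ≠ π l → g l k = 0) ∧
      g l (π l) = Γ l (π l) * (starRingEnd ℂ) (Γ (τ' l) (τ (π l))) ∧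
      g l (π l) ≠ 0 :=
  linear_part_permutation_structure_general N τ τ' Γ g hg h
end

section
/- Let N ≥ 1, let λ ∈ ℝ^N with λ_k > 0 for all k and λ' ∈ ℝ^N with λ'_l > 0 for all l, let τ and τ' be permutations of {1,…,N}, and let Γ, g be N×N complex matrices with det g ≠ 0. Suppose that in ℂ[X_1,…,X_N,Y_1,…,Y_N], for every l = 1,…,N, both identities hold: (i) Σ_{k=1}^N g_{l,k}·X_k·Y_{τ(k)} = (Σ_{i=1}^N Γ_{l,i}·X_i)·(Σ_{j=1}^N conj(Γ_{τ'(l),j})·Y_j), and (ii) Σ_{k=1}^N λ_k·g_{l,k}·X_k·X_{τ(k)} = λ'_l·(Σ_{i=1}^N Γ_{l,i}·X_i)·(Σ_{j=1}^N Γ_{τ'(l),j}·X_j). Then det Γ ≠ 0; there is a permutation π of {1,…,N} such that for every l the entry Γ_{l,k} is nonzero exactly when k = π(l) and τ(π(l)) = π(τ'(l)); moreover λ'_l = λ_{π(l)} for every l, and every entry of Γ is a real number. -/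
/-! Comparing coefficients in (i) shows that each rank-one matrix
`(Γ_{l,i} · conj Γ_{τ' l,j})_{i,j}` is supported on the graph of `τ`; as no row of the invertible
`g` vanishes, every row of `Γ` has exactly one nonzero entry, in a column `π l`, and invertibility
of `g` makes `π` a permutation. Evaluating (ii) at `X = 1` then gives
`λ_{π l} · conj z = λ'_l · z` for the nonzero entry `z = Γ_{τ' l, π (τ' l)}`; taking absolute
values gives `λ_{π l} = λ'_l`, so `conj z = z`. -/

open MvPolynomial ComplexConjugate

variable {R n : Type*} [DecidableEq n]

theorem eq_of_mul_eq_ite [MulZeroClass R] [NoZeroDivisors R] {σ : n → n}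
    (hσ : Function.Injective σ) {a b c : n → R}
    (h : ∀ i j, b i * c j = if σ i = j then a i else 0) {k : n} (hk : a k ≠ 0) {i : n}
    (hi : b i ≠ 0) : i = k := by
  have hc : c (σ k) ≠ 0 := right_ne_zero_of_mul (a := b k) (by simpa [h] using hk)
  by_contra hik
  simpa [h, hσ.ne hik] using mul_ne_zero hi hc

variable [Fintype n]

theorem mul_eq_ite_of_sum_X_mul_X_eq [CommSemiring R] {σ : n → n} {a b c : n → R}
    (h : (∑ k, C (a k) * X (Sum.inl k) * X (Sum.inr (σ k)) : MvPolynomial (n ⊕ n) R) =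
      (∑ i, C (b i) * X (Sum.inl i)) * ∑ j, C (c j) * X (Sum.inr j)) (i j : n) :
    b i * c j = if σ i = j then a i else 0 := by
  have := congrArg (eval (Sum.elim (Pi.single i 1) (Pi.single j 1))) h
  simp only [map_sum, map_mul, eval_C, eval_X, Sum.elim_inl, Sum.elim_inr, Pi.single_apply,
    mul_ite, mul_one, mul_zero, Finset.sum_ite_eq', Finset.mem_univ, if_true] at this
  rw [Fintype.sum_eq_single i fun k hk => by simp [hk]] at this
  simpa [eq_comm] using this.symm

theorem Matrix.bijective_of_det_ne_zero [CommRing R] {M : Matrix n n R} (hM : M.det ≠ 0)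
    {f : n → n} (hf : ∀ i j, M i j ≠ 0 → j = f i) : Function.Bijective f := by
  refine Finite.surjective_iff_bijective.1 fun j => ?_
  by_contra! hj
  exact hM (det_eq_zero_of_column_eq_zero j fun i => by_contra fun hij => hj i (hf i j hij).symm)

theorem Matrix.det_ne_zero_of_ne_zero_iff_eq_perm_s7 [CommRing R] [IsDomain R] {M : Matrix n n R}
    (π : Equiv.Perm n) (hM : ∀ i j, M i j ≠ 0 ↔ j = π i) : M.det ≠ 0 := by
  have hdiag : M = (diagonal fun i => M i (π i)).submatrix id π.symm := by
    ext i j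
    by_cases hij : j = π i
    · simp [hij]
    · simp [Equiv.eq_symm_apply, Ne.symm hij, not_not.1 (mt (hM i j).1 hij)]
  rw [hdiag, det_permute', det_diagonal]
  refine mul_ne_zero ?_ (Finset.prod_ne_zero_iff.2 fun i _ => (hM i _).2 rfl)
  rcases Int.units_eq_one_or (Equiv.Perm.sign π) with h | h <;> simp [h]

theorem Matrix.exists_perm_of_mul_eq_ite [CommRing R] [IsDomain R] {σ : Equiv.Perm n}
    {A B G : Matrix n n R} (hG : G.det ≠ 0)
    (h : ∀ l i j, A l i * B l j = if σ i = j then G l i else 0) :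
    ∃ π : Equiv.Perm n, ∀ l, (∀ k, A l k ≠ 0 ↔ k = π l) ∧ B l (σ (π l)) ≠ 0 := by
  have hG_apply : ∀ l k, G l k = A l k * B l (σ k) := by simp [h]
  have hrow : ∀ l, ∃ k, G l k ≠ 0 := fun l => by
    by_contra! hl
    exact hG (det_eq_zero_of_row_eq_zero l hl)
  choose f hf using hrow
  have hA : ∀ l k, A l k ≠ 0 ↔ k = f l := fun l k =>
    ⟨eq_of_mul_eq_ite σ.injective (h l) (hf l),
      fun hk => hk ▸ left_ne_zero_of_mul (hG_apply l _ ▸ hf l)⟩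
  have hf_bij : Function.Bijective f := bijective_of_det_ne_zero hG fun l k hlk =>
    (hA l k).1 (left_ne_zero_of_mul (hG_apply l k ▸ hlk))
  exact ⟨Equiv.ofBijective f hf_bij, fun l =>
    ⟨hA l, right_ne_zero_of_mul (hG_apply l _ ▸ hf l)⟩⟩

theorem Complex.eq_and_im_eq_zero_of_mul_conj_eq {a b : ℝ} (ha : 0 < a) (hb : 0 ≤ b) {z : ℂ}
    (hz : z ≠ 0) (h : a * conj z = b * z) : a = b ∧ z.im = 0 := by
  have hab : a = b := by
    have := congrArg norm h
    simp only [norm_mul, Complex.norm_conj, Complex.norm_real, Real.norm_eq_abs,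
      abs_of_pos ha, abs_of_nonneg hb] at this
    exact mul_right_cancel₀ (norm_ne_zero_iff.2 hz) this
  subst hab
  exact ⟨rfl, Complex.conj_eq_iff_im.1 (mul_left_cancel₀ (Complex.ofReal_ne_zero.2 ha.ne') h)⟩

theorem linear_part_lambda_and_reality_general (N : ℕ)
    (lam lam' : Fin N → ℝ) (hlam : ∀ k, 0 < lam k) (hlam' : ∀ l, 0 < lam' l)
    (τ τ' : Equiv.Perm (Fin N)) (Γ g : Matrix (Fin N) (Fin N) ℂ) (hg : g.det ≠ 0)
    (hi : ∀ l : Fin N,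
        (∑ k : Fin N, C (g l k) * X (Sum.inl k) * X (Sum.inr (τ k))
            : MvPolynomial (Fin N ⊕ Fin N) ℂ) =
          (∑ i : Fin N, C (Γ l i) * X (Sum.inl i)) *
            (∑ j : Fin N, C ((starRingEnd ℂ) (Γ (τ' l) j)) * X (Sum.inr j)))
    (hii : ∀ l : Fin N,
        (∑ k : Fin N, C ((lam k : ℂ) * g l k) * X (Sum.inl k) * X (Sum.inl (τ k))
            : MvPolynomial (Fin N ⊕ Fin N) ℂ) =
          C ((lam' l : ℂ)) * ((∑ i : Fin N, C (Γ l i) * X (Sum.inl i)) *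
            (∑ j : Fin N, C (Γ (τ' l) j) * X (Sum.inl j)))) :
    Γ.det ≠ 0 ∧
      (∃ π : Equiv.Perm (Fin N),
        (∀ l : Fin N, (∀ k : Fin N, Γ l k ≠ 0 ↔ k = π l) ∧ τ (π l) = π (τ' l)) ∧
        (∀ l : Fin N, lam' l = lam (π l))) ∧
      (∀ l k : Fin N, (Γ l k).im = 0) := by
  have hkey l := mul_eq_ite_of_sum_X_mul_X_eq (hi l)
  obtain ⟨π, hπ⟩ := Matrix.exists_perm_of_mul_eq_ite hg hkey
  have hΓ_zero l k (hk : k ≠ π l) : Γ l k = 0 := not_not.1 (mt ((hπ l).1 k).1 hk)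
  have hτπ l : τ (π l) = π (τ' l) := ((hπ (τ' l)).1 _).1 (by simpa using (hπ l).2)
  have hdiag l :
      lam (π l) * conj (Γ (τ' l) (π (τ' l))) = lam' l * Γ (τ' l) (π (τ' l)) := by
    have h := congrArg (eval (Sum.elim 1 0)) (hii l)
    simp only [map_sum, map_mul, eval_C, eval_X, Sum.elim_inl, Pi.one_apply, mul_one] at h
    have hg_apply k : g l k = Γ l k * conj (Γ (τ' l) (τ k)) := by simp [hkey]
    rw [Fintype.sum_eq_single (π l) fun k hk => by simp [hg_apply, hΓ_zero l k hk],
      Fintype.sum_eq_single (π l) (hΓ_zero l), Fintype.sum_eq_single _ (hΓ_zero (τ' l)),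
      hg_apply, hτπ] at h
    exact mul_left_cancel₀ (((hπ l).1 _).2 rfl) (by linear_combination h)
  have hreal l := Complex.eq_and_im_eq_zero_of_mul_conj_eq (hlam _) (hlam' l).le
    (((hπ (τ' l)).1 _).2 rfl) (hdiag l)
  refine ⟨Matrix.det_ne_zero_of_ne_zero_iff_eq_perm_s7 π fun l => (hπ l).1,
    ⟨π, fun l => ⟨(hπ l).1, hτπ l⟩, fun l => (hreal l).1.symm⟩, fun l k => ?_⟩
  by_cases hk : k = π l
  · simpa [hk] using (hreal (τ'.symm l)).2
  · simp [hΓ_zero l k hk]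

/-- Let `λ, λ'` have positive entries, `τ, τ'` be permutations of `{1,…,N}`,
and `Γ, g` be `N×N` complex matrices with `det g ≠ 0`. Suppose that in
`ℂ[X_1,…,X_N,Y_1,…,Y_N]` (here `X_k = X (Sum.inl k)`, `Y_j = X (Sum.inr j)`) both
(i) `Σ_k g_{l,k}·X_k·Y_{τ(k)} = (Σ_i Γ_{l,i}·X_i)·(Σ_j conj(Γ_{τ'(l),j})·Y_j)` and
(ii) `Σ_k λ_k·g_{l,k}·X_k·X_{τ(k)} = λ'_l·(Σ_i Γ_{l,i}·X_i)·(Σ_j Γ_{τ'(l),j}·X_j)` hold for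
every `l`. Then `det Γ ≠ 0`; there is a permutation `π` with, for every `l`,
`Γ_{l,k} ≠ 0` exactly when `k = π(l)` and `τ(π(l)) = π(τ'(l))`; moreover
`λ'_l = λ_{π(l)}` for every `l`, and every entry of `Γ` is real. -/
theorem linear_part_lambda_and_reality (N : ℕ) (hN : 1 ≤ N)
    (lam lam' : Fin N → ℝ) (hlam : ∀ k, 0 < lam k) (hlam' : ∀ l, 0 < lam' l)
    (τ τ' : Equiv.Perm (Fin N)) (Γ g : Matrix (Fin N) (Fin N) ℂ) (hg : g.det ≠ 0)
    (hi : ∀ l : Fin N,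
        (∑ k : Fin N, C (g l k) * X (Sum.inl k) * X (Sum.inr (τ k))
            : MvPolynomial (Fin N ⊕ Fin N) ℂ) =
          (∑ i : Fin N, C (Γ l i) * X (Sum.inl i)) *
            (∑ j : Fin N, C ((starRingEnd ℂ) (Γ (τ' l) j)) * X (Sum.inr j)))
    (hii : ∀ l : Fin N,
        (∑ k : Fin N, C ((lam k : ℂ) * g l k) * X (Sum.inl k) * X (Sum.inl (τ k))
            : MvPolynomial (Fin N ⊕ Fin N) ℂ) =
          C ((lam' l : ℂ)) * ((∑ i : Fin N, C (Γ l i) * X (Sum.inl i)) *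
            (∑ j : Fin N, C (Γ (τ' l) j) * X (Sum.inl j)))) :
    Γ.det ≠ 0 ∧
      (∃ π : Equiv.Perm (Fin N),
        (∀ l : Fin N, (∀ k : Fin N, Γ l k ≠ 0 ↔ k = π l) ∧ τ (π l) = π (τ' l)) ∧
        (∀ l : Fin N, lam' l = lam (π l))) ∧
      (∀ l k : Fin N, (Γ l k).im = 0) :=
  linear_part_lambda_and_reality_general N lam lam' hlam hlam' τ τ' Γ g hg hi hii
end

section
/- Let λ ∈ ℝ with 0 < λ < 1/2. In the polynomial ring ℂ[z,ζ] in two variables set q = z·ζ + λ·(z² + ζ²) and let T be the differential operator T = ∂²/∂z∂ζ + λ·(∂²/∂z² + ∂²/∂ζ²). Then for every integer p ≥ 2 and every homogeneous polynomial P of degree p there exist a unique homogeneous polynomial A of degree p−2 and a unique homogeneous polynomial C of degree p such that P = A·q + C and T(C) = 0. -/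
/-!
The Fischer inner product `⟨P, Q⟩ = ∑ₘ m! · conj (Pₘ) · Qₘ` makes multiplication by `X i` adjoint
to `∂ᵢ`; as `λ` is real, multiplication by `q` is then adjoint to `T`. So `T (q·A) = 0` forces
`⟨q·A, q·A⟩ = 0`, i.e. `A = 0`: the map `A ↦ T (q·A)` is injective on the finite-dimensional space
of homogeneous polynomials of degree `p - 2`, hence bijective. Choosing `A` with `T (q·A) = T P`
and `C = P - A·q` gives the decomposition; injectivity gives its uniqueness.
-/

noncomputable section

open MvPolynomial

/-- The quadric `q = z·ζ + λ·(z² + ζ²)` in `ℂ[z,ζ]`, where `z = X 0`, `ζ = X 1`. -/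
def qPoly2 (lam : ℝ) : MvPolynomial (Fin 2) ℂ :=
  X 0 * X 1 + C (lam : ℂ) * (X 0 ^ 2 + X 1 ^ 2)

/-- The Fischer differential operator `T = ∂²/∂z∂ζ + λ·(∂²/∂z² + ∂²/∂ζ²)`
associated to `q = z·ζ + λ·(z² + ζ²)`. -/
def fischerOp2 (lam : ℝ) (P : MvPolynomial (Fin 2) ℂ) : MvPolynomial (Fin 2) ℂ :=
  pderiv 0 (pderiv 1 P) + C (lam : ℂ) * (pderiv 0 (pderiv 0 P) + pderiv 1 (pderiv 1 P))

namespace MvPolynomial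

open Finsupp ComplexConjugate

variable {σ 𝕜 : Type*} [Fintype σ] [RCLike 𝕜]

def multiFactorial (m : σ →₀ ℕ) : ℕ := ∏ i, (m i).factorial

lemma multiFactorial_pos (m : σ →₀ ℕ) : 0 < multiFactorial m :=
  Finset.prod_pos fun i _ => Nat.factorial_pos (m i)

lemma multiFactorial_add_single [DecidableEq σ] (m : σ →₀ ℕ) (i : σ) :
    multiFactorial (m + single i 1) = (m i + 1) * multiFactorial m := by
  simp only [multiFactorial, Fintype.prod_eq_mul_prod_compl i, Finsupp.add_apply,
    single_eq_same, Nat.factorial_succ, mul_assoc]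
  congr 2
  refine Finset.prod_congr rfl fun j hj => ?_
  have hji : j ≠ i := by simpa using hj
  simp [hji.symm]

def fischerPairing (P Q : MvPolynomial σ 𝕜) : 𝕜 :=
  ∑ m ∈ P.support, (multiFactorial m : 𝕜) * conj (coeff m P) * coeff m Q

lemma fischerPairing_eq_sum_of_support_subset {P Q : MvPolynomial σ 𝕜} {s : Finset (σ →₀ ℕ)}
    (h : P.support ⊆ s) :
    fischerPairing P Q = ∑ m ∈ s, (multiFactorial m : 𝕜) * conj (coeff m P) * coeff m Q :=
  Finset.sum_subset h fun m _ hm => by simp [notMem_support_iff.mp hm]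

lemma fischerPairing_add_left (P P' Q : MvPolynomial σ 𝕜) :
    fischerPairing (P + P') Q = fischerPairing P Q + fischerPairing P' Q := by
  classical
  rw [fischerPairing_eq_sum_of_support_subset support_add,
    fischerPairing_eq_sum_of_support_subset Finset.subset_union_left,
    fischerPairing_eq_sum_of_support_subset Finset.subset_union_right, ← Finset.sum_add_distrib]
  refine Finset.sum_congr rfl fun m _ => ?_
  simp only [coeff_add, map_add]
  ring

lemma fischerPairing_smul_left (c : 𝕜) (P Q : MvPolynomial σ 𝕜) :
    fischerPairing (c • P) Q = conj c * fischerPairing P Q := by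
  rw [fischerPairing_eq_sum_of_support_subset support_smul, fischerPairing, Finset.mul_sum]
  refine Finset.sum_congr rfl fun m _ => ?_
  simp only [coeff_smul, smul_eq_mul, map_mul]
  ring

lemma fischerPairing_add_right (P Q Q' : MvPolynomial σ 𝕜) :
    fischerPairing P (Q + Q') = fischerPairing P Q + fischerPairing P Q' := by
  simp only [fischerPairing, coeff_add, mul_add, Finset.sum_add_distrib]

lemma fischerPairing_smul_right (c : 𝕜) (P Q : MvPolynomial σ 𝕜) :
    fischerPairing P (c • Q) = c * fischerPairing P Q := by
  simp only [fischerPairing, coeff_smul, smul_eq_mul, Finset.mul_sum]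
  exact Finset.sum_congr rfl fun m _ => by ring

lemma fischerPairing_zero_right (P : MvPolynomial σ 𝕜) : fischerPairing P 0 = 0 := by
  simp [fischerPairing]

lemma fischerPairing_monomial_left (m : σ →₀ ℕ) (c : 𝕜) (Q : MvPolynomial σ 𝕜) :
    fischerPairing (monomial m c) Q = multiFactorial m * conj c * coeff m Q := by
  classical
  rw [fischerPairing_eq_sum_of_support_subset support_monomial_subset, Finset.sum_singleton,
    coeff_monomial, if_pos rfl]

lemma fischerPairing_X_mul_left (i : σ) (P Q : MvPolynomial σ 𝕜) :
    fischerPairing (X i * P) Q = fischerPairing P (pderiv i Q) := by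
  classical
  induction P using MvPolynomial.induction_on' with
  | add P P' hP hP' => rw [mul_add, fischerPairing_add_left, fischerPairing_add_left, hP, hP']
  | monomial m c =>
    rw [X, monomial_mul, one_mul, fischerPairing_monomial_left, fischerPairing_monomial_left,
      coeff_pderiv, add_comm, multiFactorial_add_single]
    push_cast
    ring

lemma eq_zero_of_fischerPairing_self_eq_zero {P : MvPolynomial σ 𝕜} (h : fischerPairing P P = 0) :
    P = 0 := by
  by_contra hP
  have hterm : ∀ m ∈ P.support, (multiFactorial m : 𝕜) * conj (coeff m P) * coeff m P
      = ((multiFactorial m * ‖coeff m P‖ ^ 2 : ℝ) : 𝕜) := by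
    intro m _
    rw [mul_assoc, RCLike.conj_mul]
    push_cast
    ring
  have hpos : 0 < ∑ m ∈ P.support, multiFactorial m * ‖coeff m P‖ ^ 2 :=
    Finset.sum_pos (fun m hm => by
        have := multiFactorial_pos m
        have := mem_support_iff.mp hm
        positivity)
      (support_nonempty.mpr hP)
  rw [fischerPairing, Finset.sum_congr rfl hterm, ← RCLike.ofReal_sum] at h
  exact hpos.ne' (RCLike.ofReal_eq_zero.mp h)

end MvPolynomial

section Quadric

variable (lam : ℝ)

@[simps]
def fischerOp2Linear : MvPolynomial (Fin 2) ℂ →ₗ[ℂ] MvPolynomial (Fin 2) ℂ where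
  toFun := fischerOp2 lam
  map_add' P Q := by
    simp only [fischerOp2, map_add]
    ring
  map_smul' c P := by
    simp only [fischerOp2, pderiv_C_mul, RingHom.id_apply, smul_eq_C_mul]
    ring

lemma fischerOp2_sub (P Q : MvPolynomial (Fin 2) ℂ) :
    fischerOp2 lam (P - Q) = fischerOp2 lam P - fischerOp2 lam Q :=
  map_sub (fischerOp2Linear lam) P Q

lemma isHomogeneous_qPoly2 : (qPoly2 lam).IsHomogeneous 2 :=
  ((isHomogeneous_X ℂ 0).mul (isHomogeneous_X ℂ 1)).add
    ((isHomogeneous_C _ _).mul (((isHomogeneous_X ℂ 0).pow 2).add ((isHomogeneous_X ℂ 1).pow 2)))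

lemma MvPolynomial.IsHomogeneous.fischerOp2 {P : MvPolynomial (Fin 2) ℂ} {n : ℕ}
    (hP : P.IsHomogeneous n) :
    (fischerOp2 lam P).IsHomogeneous (n - 2) := by
  have h : ∀ i j : Fin 2, (pderiv i (pderiv j P)).IsHomogeneous (n - 2) := fun i j => by
    simpa only [Nat.sub_sub] using hP.pderiv.pderiv
  exact (h 0 1).add (((h 0 0).add (h 1 1)).C_mul _)

lemma qPoly2_ne_zero : qPoly2 lam ≠ 0 := by
  intro h
  have := congrArg (coeff (Finsupp.single 0 1 + Finsupp.single 1 1)) h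
  simp [qPoly2, coeff_X_mul', coeff_X_pow, Finsupp.ext_iff, Fin.forall_fin_two] at this

lemma fischerPairing_qPoly2_mul_left (A B : MvPolynomial (Fin 2) ℂ) :
    fischerPairing (qPoly2 lam * A) B = fischerPairing A (fischerOp2 lam B) := by
  have hq : qPoly2 lam * A = X 1 * (X 0 * A) + ((lam : ℂ) • (X 0 * (X 0 * A))
      + (lam : ℂ) • (X 1 * (X 1 * A))) := by
    simp only [qPoly2, smul_eq_C_mul]
    ring
  have hT : fischerOp2 lam B = pderiv 0 (pderiv 1 B) + ((lam : ℂ) • pderiv 0 (pderiv 0 B)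
      + (lam : ℂ) • pderiv 1 (pderiv 1 B)) := by
    simp only [fischerOp2, smul_eq_C_mul]
    ring
  simp only [hq, hT, fischerPairing_add_left, fischerPairing_smul_left, fischerPairing_X_mul_left,
    fischerPairing_add_right, fischerPairing_smul_right, Complex.conj_ofReal]

lemma eq_zero_of_fischerOp2_qPoly2_mul_eq_zero {A : MvPolynomial (Fin 2) ℂ}
    (h : fischerOp2 lam (qPoly2 lam * A) = 0) : A = 0 := by
  have hqA : qPoly2 lam * A = 0 := eq_zero_of_fischerPairing_self_eq_zero <| by
    rw [fischerPairing_qPoly2_mul_left, h, fischerPairing_zero_right]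
  exact (mul_eq_zero.mp hqA).resolve_left (qPoly2_ne_zero lam)

lemma exists_isHomogeneous_fischerOp2_qPoly2_mul_eq {n : ℕ} {R : MvPolynomial (Fin 2) ℂ}
    (hR : R.IsHomogeneous n) :
    ∃ A : MvPolynomial (Fin 2) ℂ, A.IsHomogeneous n ∧ fischerOp2 lam (qPoly2 lam * A) = R := by
  let V := homogeneousSubmodule (Fin 2) ℂ n
  have : FiniteDimensional ℂ V := Module.Finite.iff_fg.mpr (homogeneousSubmodule_fg _ _ n)
  let g := (fischerOp2Linear lam).comp (LinearMap.mulLeft ℂ (qPoly2 lam))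
  have hmaps : Set.MapsTo g V V := fun A hA => (mem_homogeneousSubmodule n _).mpr <| by
    simpa [g] using ((isHomogeneous_qPoly2 lam).mul hA).fischerOp2 lam
  let f := g.restrict hmaps
  have hf : Function.Injective f := (injective_iff_map_eq_zero f).mpr fun A hA =>
    Subtype.ext (eq_zero_of_fischerOp2_qPoly2_mul_eq_zero lam (congrArg Subtype.val hA))
  obtain ⟨A, hA⟩ := LinearMap.injective_iff_surjective.mp hf ⟨R, hR⟩
  exact ⟨A, A.2, congrArg Subtype.val hA⟩

lemma eq_and_eq_of_mul_qPoly2_add_eq {A A' C C' : MvPolynomial (Fin 2) ℂ}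
    (h : A * qPoly2 lam + C = A' * qPoly2 lam + C') (hC : fischerOp2 lam C = 0)
    (hC' : fischerOp2 lam C' = 0) : A = A' ∧ C = C' := by
  have hA : A - A' = 0 := eq_zero_of_fischerOp2_qPoly2_mul_eq_zero lam <| by
    rw [show qPoly2 lam * (A - A') = C' - C by linear_combination h, fischerOp2_sub, hC, hC',
      sub_zero]
  obtain rfl := sub_eq_zero.mp hA
  exact ⟨rfl, add_left_cancel h⟩

end Quadric

theorem fischer_decomposition_unique_general (lam : ℝ)
    (p : ℕ) (hp : 2 ≤ p) (P : MvPolynomial (Fin 2) ℂ) (hP : P.IsHomogeneous p) :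
    ∃! AC : MvPolynomial (Fin 2) ℂ × MvPolynomial (Fin 2) ℂ,
      AC.1.IsHomogeneous (p - 2) ∧ AC.2.IsHomogeneous p ∧
      P = AC.1 * qPoly2 lam + AC.2 ∧ fischerOp2 lam AC.2 = 0 := by
  obtain ⟨A, hA, hTA⟩ := exists_isHomogeneous_fischerOp2_qPoly2_mul_eq lam (hP.fischerOp2 lam)
  have hAq : (A * qPoly2 lam).IsHomogeneous p := by
    simpa [Nat.sub_add_cancel hp] using hA.mul (isHomogeneous_qPoly2 lam)
  have hC : fischerOp2 lam (P - A * qPoly2 lam) = 0 := by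
    rw [fischerOp2_sub, mul_comm, hTA, sub_self]
  refine ⟨(A, P - A * qPoly2 lam), ⟨hA, hP.sub hAq, by ring, hC⟩, ?_⟩
  rintro ⟨A', C'⟩ ⟨-, -, hP', hC'⟩
  have hdecomp : A' * qPoly2 lam + C' = A * qPoly2 lam + (P - A * qPoly2 lam) := by
    rw [← hP']
    ring
  obtain ⟨rfl, rfl⟩ := eq_and_eq_of_mul_qPoly2_add_eq lam hdecomp hC' hC
  rfl

/-- **Fischer decomposition.** Let `0 < λ < 1/2`. For every `p ≥ 2` and every
homogeneous polynomial `P` of degree `p` there exist a unique homogeneous `A` of degree `p−2`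
and a unique homogeneous `C` of degree `p` such that `P = A·q + C` and `T(C) = 0`. -/
theorem fischer_decomposition_unique (lam : ℝ) (h0 : 0 < lam) (h1 : lam < 1 / 2)
    (p : ℕ) (hp : 2 ≤ p) (P : MvPolynomial (Fin 2) ℂ) (hP : P.IsHomogeneous p) :
    ∃! AC : MvPolynomial (Fin 2) ℂ × MvPolynomial (Fin 2) ℂ,
      AC.1.IsHomogeneous (p - 2) ∧ AC.2.IsHomogeneous p ∧
      P = AC.1 * qPoly2 lam + AC.2 ∧ fischerOp2 lam AC.2 = 0 :=
  fischer_decomposition_unique_general lam p hp P hP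
end
end
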